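/- Consider n particles x_1(t),...,x_n(t) on S^{d-1} evolving by ẋ_i = P^⊥_{x_i}( (1/Z_{β,i}) Σ_j e^{β⟨x_i,x_j⟩} x_j ), where Z_{β,i} = Σ_k e^{β⟨x_i,x_k⟩} and P^⊥_x y = y - ⟨x,y⟩x. If there exists w ∈ S^{d-1} with ⟨x_i(0), w⟩ > 0 for all i, then the function t ↦ min_{i∈[n]} ⟨x_i(t), w⟩ is non-decreasing on [0,∞); in particular all particles remain in the open hemisphere {x : ⟨x,w⟩ > 0} for all t ≥ 0. -/

import Mathlib

/-! The softmax-weighted average `v` of the particles is a convex combination of points of the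
unit ball, so `‖v‖ ≤ 1` and `⟪v, w⟫ ≥ m := minⱼ ⟪xⱼ, w⟫`. For a particle `xᵢ` realizing the minimum,
`⟪v - ⟪xᵢ, v⟫ xᵢ, w⟫ = ⟪v, w⟫ - ⟪xᵢ, v⟫ m ≥ m - m = 0` as long as `m ≥ 0`. Hence the minimizing
particles never move away from `w` while the minimum is positive, and a barrier argument for the
right Dini derivative of the (nonsmooth) minimum shows that the minimum is non-decreasing. -/

open Set
open scoped RealInnerProductSpace

/-- The self-attention vector field: for a configuration `x : Fin n → ℝ^d`, the
velocity of particle `i` is the projection onto the tangent space at `x i` of the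
softmax-weighted average `(1/Z_{β,i}) Σ_j e^{β⟨x i, x j⟩} x j`. -/
noncomputable def SAfield {d n : ℕ} (β : ℝ) (x : Fin n → EuclideanSpace ℝ (Fin d))
    (i : Fin n) : EuclideanSpace ℝ (Fin d) :=
  let v := (∑ k, Real.exp (β * ⟪x i, x k⟫))⁻¹ •
      ∑ j, Real.exp (β * ⟪x i, x j⟫) • x j
  v - ⟪x i, v⟫ • x i

open Filter Topology

lemma inner_sub_inner_smul_nonneg {E : Type*} [NormedAddCommGroup E] [InnerProductSpace ℝ E]
    {u v w : E} (hu : ‖u‖ ≤ 1) (hv : ‖v‖ ≤ 1) (huw : 0 ≤ ⟪u, w⟫) (hvw : ⟪u, w⟫ ≤ ⟪v, w⟫) :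
    0 ≤ ⟪v - ⟪u, v⟫ • u, w⟫ := by
  have huv : ⟪u, v⟫ ≤ 1 :=
    (real_inner_le_norm u v).trans (mul_le_one₀ hu (norm_nonneg v) hv)
  rw [inner_sub_left, real_inner_smul_left]
  nlinarith

lemma inner_SAfield_nonneg_of_forall_le {d n : ℕ} (β : ℝ) {y : Fin n → EuclideanSpace ℝ (Fin d)}
    (hy : ∀ j, ‖y j‖ ≤ 1) {w : EuclideanSpace ℝ (Fin d)} {i : Fin n} (hi : 0 ≤ ⟪y i, w⟫)
    (hmin : ∀ j, ⟪y i, w⟫ ≤ ⟪y j, w⟫) : 0 ≤ ⟪SAfield β y i, w⟫ := by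
  -- the softmax-weighted average in `SAfield` is literally this center of mass
  set v := Finset.univ.centerMass (fun j => Real.exp (β * ⟪y i, y j⟫)) y
  have hv : v ∈ Metric.closedBall 0 1 ∩ {z | ⟪y i, w⟫ ≤ ⟪w, z⟫} :=
    ((convex_closedBall 0 1).inter (convex_halfSpace_ge (innerₛₗ ℝ w).isLinear _)).centerMass_mem
      (fun j _ => (Real.exp_pos _).le)
      (Finset.sum_pos (fun j _ => Real.exp_pos _) ⟨i, Finset.mem_univ i⟩)
      fun j _ => ⟨mem_closedBall_zero_iff.2 (hy j), by simpa [real_inner_comm] using hmin j⟩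
  change 0 ≤ ⟪v - ⟪y i, v⟫ • y i, w⟫
  exact inner_sub_inner_smul_nonneg (hy i) (mem_closedBall_zero_iff.1 hv.1) hi
    (by simpa [real_inner_comm] using hv.2)

section MinOfFunctions

variable {ι : Type*} [Finite ι] [Nonempty ι]

lemma eventually_lt_slope_iInf {f : ι → ℝ → ℝ} {f' : ι → ℝ} {x r : ℝ}
    (hf : ∀ i, HasDerivAt (f i) (f' i) x) (hr : ∀ i, (∀ j, f i x ≤ f j x) → r < f' i) :
    ∀ᶠ z in 𝓝[>] x, r < slope (fun t => ⨅ i, f i t) x z := by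
  set F := fun t => ⨅ i, f i t
  have above : ∀ i, ∀ᶠ z in 𝓝[>] x, F x + r * (z - x) < f i z := by
    intro i
    rcases (ciInf_le (Finite.bddBelow_range _) i : F x ≤ f i x).eq_or_lt with hmin | hlt
    · have hslope := (hasDerivAt_iff_tendsto_slope.1 (hf i)).mono_left
        (nhdsWithin_mono x fun z (hz : x < z) => hz.ne')
      have hri : r < f' i := hr i fun j => hmin ▸ ciInf_le (Finite.bddBelow_range _) j
      filter_upwards [hslope.eventually (eventually_gt_nhds hri), self_mem_nhdsWithin]
        with z hz hxz
      rw [slope_def_field, lt_div_iff₀ (sub_pos.2 hxz)] at hz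
      linarith
    · have hline : Tendsto (fun z => F x + r * (z - x)) (𝓝[>] x) (𝓝 (F x)) := by
        refine tendsto_nhdsWithin_of_tendsto_nhds ?_
        simpa using
          (((continuous_id.sub (continuous_const (y := x))).const_mul r).const_add (F x)).tendsto x
      exact hline.eventually_lt ((hf i).continuousAt.tendsto.mono_left nhdsWithin_le_nhds) hlt
  filter_upwards [eventually_all.2 above, self_mem_nhdsWithin] with z hz hxz
  obtain ⟨i, hi⟩ := exists_eq_ciInf_of_finite (f := fun i => f i z)
  rw [slope_def_field, lt_div_iff₀ (sub_pos.2 hxz)]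
  linarith [hi ▸ hz i]

variable {f f' : ι → ℝ → ℝ} {a : ℝ}

lemma iInf_sub_le_iInf_of_hasDerivAt (hf : ∀ i, ∀ t ∈ Ici a, HasDerivAt (f i) (f' i t) t)
    (hf' : ∀ t ∈ Ici a, ∀ i, (∀ j, f i t ≤ f j t) → 0 < f i t → 0 ≤ f' i t)
    {b δ : ℝ} (hab : a < b) (hδ : 0 < δ) (hδa : δ < ⨅ i, f i a) :
    (⨅ i, f i a) - δ ≤ ⨅ i, f i b := by
  have := Fintype.ofFinite ι
  set F := fun t => ⨅ i, f i t
  have hba : 0 < b - a := sub_pos.2 hab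
  have hF : ContinuousOn (fun t => -F t) (Icc a b) := fun t ht => by
    have : ContinuousAt F t := by
      simpa only [Finset.inf'_univ_eq_ciInf] using
        ContinuousAt.finset_inf'_apply Finset.univ_nonempty fun i _ => (hf i t ht.1).continuousAt
    exact this.neg.continuousWithinAt
  -- `-D t` bounds the lower right Dini derivative of `-F` at `t`
  set D := fun t => ⨅ i : {i // ∀ j, f i t ≤ f j t}, f' i t
  have hD : ∀ t ∈ Ico a b, ∀ r, -D t < r → ∃ᶠ z in 𝓝[>] t, slope (fun t => -F t) t z < r := by
    intro t ht r hr
    refine (eventually_lt_slope_iInf (r := -r) (fun i => hf i t ht.1) fun i hi => ?_).frequently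
      |>.mono fun z hz => by rw [slope_neg]; linarith
    linarith [ciInf_le (Finite.bddBelow_range fun i : {i // ∀ j, f i t ≤ f j t} => f' i t) ⟨i, hi⟩]
  -- Barrier: at a contact point with the line `F = F a - δ (t - a) / (b - a)` we still have
  -- `F > 0`, so the minimizing derivatives are `≥ 0`, and `-F` cannot cross the line.
  have hcontact : ∀ t ∈ Ico a b, -F t = δ / (b - a) * (t - a) - F a → -D t < δ / (b - a) := by
    intro t ht hline
    have hFt : 0 < F t := by
      have : δ / (b - a) * (t - a) ≤ δ := by
        rw [div_mul_eq_mul_div, div_le_iff₀ hba]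
        exact mul_le_mul_of_nonneg_left (by linarith [ht.2]) hδ.le
      linarith
    obtain ⟨i, hi⟩ := exists_eq_ciInf_of_finite (f := fun i => f i t)
    have : Nonempty {i // ∀ j, f i t ≤ f j t} :=
      ⟨⟨i, fun j => hi ▸ ciInf_le (Finite.bddBelow_range _) j⟩⟩
    have : 0 ≤ D t := le_ciInf fun i =>
      hf' t ht.1 i i.2 (hFt.trans_le (ciInf_le (Finite.bddBelow_range _) _))
    have : 0 < δ / (b - a) := by positivity
    linarith
  have key := image_le_of_liminf_slope_right_lt_deriv_boundary' hF hD
    (B := fun t => δ / (b - a) * (t - a) - F a) (B' := fun _ => δ / (b - a)) (by simp)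
    (by fun_prop)
    (fun t _ => by
      simpa using (((hasDerivWithinAt_id t (Ici t)).sub_const a).const_mul _).sub_const (F a))
    hcontact (right_mem_Icc.2 hab.le)
  simp only [div_mul_cancel₀ _ hba.ne'] at key
  linarith

lemma iInf_le_iInf_of_hasDerivAt (hf : ∀ i, ∀ t ∈ Ici a, HasDerivAt (f i) (f' i t) t)
    (hf' : ∀ t ∈ Ici a, ∀ i, (∀ j, f i t ≤ f j t) → 0 < f i t → 0 ≤ f' i t)
    (ha : 0 < ⨅ i, f i a) {b : ℝ} (hab : a ≤ b) : ⨅ i, f i a ≤ ⨅ i, f i b := by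
  rcases hab.eq_or_lt with rfl | hab
  · rfl
  refine le_of_forall_sub_le fun ε hε => ?_
  have := iInf_sub_le_iInf_of_hasDerivAt hf hf' hab (lt_min hε (half_pos ha))
    ((min_le_right _ _).trans_lt (half_lt_self ha))
  linarith [min_le_left ε ((⨅ i, f i a) / 2)]

lemma monotoneOn_iInf_of_hasDerivAt (hf : ∀ i, ∀ t ∈ Ici a, HasDerivAt (f i) (f' i t) t)
    (hf' : ∀ t ∈ Ici a, ∀ i, (∀ j, f i t ≤ f j t) → 0 < f i t → 0 ≤ f' i t)
    (ha : 0 < ⨅ i, f i a) : MonotoneOn (fun t => ⨅ i, f i t) (Ici a) := by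
  intro s hs t _ hst
  have hs_pos : 0 < ⨅ i, f i s := ha.trans_le (iInf_le_iInf_of_hasDerivAt hf hf' ha hs)
  exact iInf_le_iInf_of_hasDerivAt (fun i u (hu : s ≤ u) => hf i u (le_trans hs hu))
    (fun u (hu : s ≤ u) => hf' u (le_trans hs hu)) hs_pos hst

end MinOfFunctions

theorem stmt_5_general {d n : ℕ} (hn : 0 < n) (β : ℝ)
    (x : Fin n → ℝ → EuclideanSpace ℝ (Fin d))
    (hsphere : ∀ i t, x i t ∈ Metric.sphere (0 : EuclideanSpace ℝ (Fin d)) 1)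
    (hode : ∀ i, ∀ t ∈ Ici (0:ℝ),
      HasDerivAt (x i) (SAfield β (fun j => x j t) i) t)
    (w : EuclideanSpace ℝ (Fin d))
    (hinit : ∀ i, 0 < ⟪x i 0, w⟫) :
    MonotoneOn (fun t => ⨅ i, ⟪x i t, w⟫) (Ici (0:ℝ)) ∧
      ∀ t ∈ Ici (0:ℝ), ∀ i, 0 < ⟪x i t, w⟫ := by
  have : Nonempty (Fin n) := ⟨⟨0, hn⟩⟩
  have hderiv : ∀ i, ∀ t ∈ Ici (0:ℝ),
      HasDerivAt (fun t => ⟪x i t, w⟫) ⟪SAfield β (fun j => x j t) i, w⟫ t := fun i t ht => by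
    simpa using (hode i t ht).inner ℝ (hasDerivAt_const t w)
  have hpos0 : 0 < ⨅ i, ⟪x i 0, w⟫ := by
    obtain ⟨i, hi⟩ := exists_eq_ciInf_of_finite (f := fun i => ⟪x i 0, w⟫)
    exact hi ▸ hinit i
  have hmono := monotoneOn_iInf_of_hasDerivAt hderiv
    (fun t _ i hmin hpos => inner_SAfield_nonneg_of_forall_le β
      (fun j => (mem_sphere_zero_iff_norm.1 (hsphere j t)).le) hpos.le hmin) hpos0
  refine ⟨hmono, fun t ht i => ?_⟩
  calc 0 < ⨅ i, ⟪x i 0, w⟫ := hpos0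
    _ ≤ ⨅ i, ⟪x i t, w⟫ := hmono self_mem_Ici ht ht
    _ ≤ ⟪x i t, w⟫ := ciInf_le (Finite.bddBelow_range _) i

/-- Cone preservation for the self-attention dynamics: if all particles start in the
open hemisphere `{⟨·,w⟩ > 0}`, then `t ↦ min_i ⟨x_i(t), w⟩` is non-decreasing on
`[0,∞)`; in particular all particles remain in the open hemisphere for all `t ≥ 0`. -/
theorem stmt_5 {d n : ℕ} (hn : 0 < n) (β : ℝ) (hβ : 0 < β)
    (x : Fin n → ℝ → EuclideanSpace ℝ (Fin d))
    (hsphere : ∀ i t, x i t ∈ Metric.sphere (0 : EuclideanSpace ℝ (Fin d)) 1)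
    (hode : ∀ i, ∀ t ∈ Ici (0:ℝ),
      HasDerivAt (x i) (SAfield β (fun j => x j t) i) t)
    (w : EuclideanSpace ℝ (Fin d))
    (hw : w ∈ Metric.sphere (0 : EuclideanSpace ℝ (Fin d)) 1)
    (hinit : ∀ i, 0 < ⟪x i 0, w⟫) :
    MonotoneOn (fun t => ⨅ i, ⟪x i t, w⟫) (Ici (0:ℝ)) ∧
      ∀ t ∈ Ici (0:ℝ), ∀ i, 0 < ⟪x i t, w⟫ :=
  stmt_5_general hn β x hsphere hode w hinit
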